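/- (Theorem 4.1(b)) Under the multi-domain latent-variable model with block independence (Assumption 3.1) and domain variability (Assumption 3.2), suppose d̂_C > d_C and d̂_S > d_S, the sets 𝒞 and 𝒮 are simply connected open sets, and the regular density condition holds. Let r_C ∼ N(0, I_{d̂_C}) and r_S^(n) ∼ N(0, I_{d̂_S}) be independent standard Gaussian vectors, and suppose differentiable maps q̂, ê_C : ℝ^{d̂_C} → ℝ^{d̂_C}, ê_S^(n) : ℝ^{d̂_S} → ℝ^{d̂_S} (n = 1,…,N) minimize Σ_{n=1}^N E[‖ê_S^(n)(r_S^(n))‖_0] among all tuples satisfying the distribution-matching constraints that the law of q̂(ê_C(r_C), ê_S^(n)(r_S^(n))) equals P_{x^(n)} for every n. Set 𝒞̂ = ê_C(ℝ^{d̂_C}), 𝒮̂ = ∪_n ê_S^(n)(ℝ^{d̂_S}), and additionally assume q̂ : 𝒞̂ × 𝒮̂ → 𝒳 is bijective. Then f̂ := q̂^{-1}, viewed as an injective map 𝒳 → ℝ^{d̂_C + d̂_S}, is a solution of Problem (3). -/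

import Mathlib

open MeasureTheory Set
open scoped ENNReal
open scoped Classical

/-- `‖v‖₀`: the number of nonzero entries of a vector. -/
noncomputable def zeroNorm {k : ℕ} (v : Fin k → ℝ) : ℕ :=
  (Finset.univ.filter fun i => v i ≠ 0).card

section AuxiliaryLemmas
open Filter ProbabilityTheory
open scoped Topology NNReal

lemma measurable_zeroNorm (k : ℕ) :
    Measurable (fun v : Fin k → ℝ => (zeroNorm v : ℝ≥0∞)) := by
  have h : ∀ v : Fin k → ℝ, (zeroNorm v : ℝ≥0∞)
      = ∑ i : Fin k, if v i ≠ 0 then (1 : ℝ≥0∞) else 0 := by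
    intro v
    rw [zeroNorm, Finset.card_filter]
    push_cast
    exact Finset.sum_congr rfl (fun i _ => by split <;> simp)
  simp_rw [h]
  exact Finset.measurable_sum _ (fun i _ =>
    Measurable.ite ((measurable_pi_apply i) (measurableSet_singleton 0)).compl
      measurable_const measurable_const)

lemma exists_invFun {α β : Type*} [MeasurableSpace α] [MeasurableSpace β] [Nonempty α]
    {φ : α → β} {s : Set α}
    (himg : ∀ B : Set α, MeasurableSet B → MeasurableSet (φ '' (B ∩ s)))
    (hinj : InjOn φ s) :
    ∃ ψ : β → α, Measurable ψ ∧ LeftInvOn ψ φ s ∧ RightInvOn ψ φ (φ '' s) ∧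
      MapsTo ψ (φ '' s) s := by
  classical
  set a₀ := Classical.arbitrary α with ha₀
  set ψ : β → α := fun y => if y ∈ φ '' s then Function.invFunOn φ s y else a₀ with hψ
  have hval : ∀ x ∈ s, ψ (φ x) = x := by
    intro x hx
    simp only [hψ, if_pos (mem_image_of_mem _ hx)]
    exact hinj.leftInvOn_invFunOn hx
  have hkey : ∀ B : Set α,
      ψ ⁻¹' B = (φ '' (B ∩ s)) ∪ (if a₀ ∈ B then (φ '' s)ᶜ else ∅) := by
    intro B
    ext y
    by_cases hy : y ∈ φ '' s
    · obtain ⟨x, hx, rfl⟩ := hy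
      simp only [mem_preimage, hval x hx, mem_union]
      constructor
      · intro hB; exact Or.inl ⟨x, ⟨hB, hx⟩, rfl⟩
      · rintro (⟨x', ⟨hx'B, hx's⟩, hxx⟩ | hjunk)
        · rwa [hinj hx's hx hxx] at hx'B
        · exfalso
          by_cases h0 : a₀ ∈ B
          · rw [if_pos h0] at hjunk; exact hjunk (mem_image_of_mem _ hx)
          · rw [if_neg h0] at hjunk; exact hjunk
    · have : ψ y = a₀ := by simp only [hψ, if_neg hy]
      simp only [mem_preimage, this, mem_union]
      constructor
      · intro hB; right; rw [if_pos hB]; exact hy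
      · rintro (⟨x', ⟨hx'B, hx's⟩, rfl⟩ | hjunk)
        · exact absurd (mem_image_of_mem _ hx's) hy
        · by_cases h0 : a₀ ∈ B
          · exact h0
          · rw [if_neg h0] at hjunk; exact hjunk.elim
  have hmes : Measurable ψ := by
    intro B hB
    rw [hkey B]
    refine (himg B hB).union ?_
    split
    · simpa using (himg univ MeasurableSet.univ).compl
    · exact MeasurableSet.empty
  refine ⟨ψ, hmes, hval, ?_, ?_⟩
  · intro y hy
    obtain ⟨x, hx, rfl⟩ := hy
    rw [hval x hx]
  · intro y hy
    obtain ⟨x, hx, rfl⟩ := hy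
    rw [hval x hx]; exact hx

lemma cdf_leftLim_eq {ν : Measure ℝ} [IsProbabilityMeasure ν] [NullSingletonClass ν] (b : ℝ) :
    Function.leftLim (cdf ν) b = cdf ν b := by
  have h1 : (cdf ν).measure {b} = ENNReal.ofReal (cdf ν b - Function.leftLim (cdf ν) b) :=
    StieltjesFunction.measure_singleton _ b
  rw [measure_cdf, measure_singleton] at h1
  have h2 : cdf ν b - Function.leftLim (cdf ν) b ≤ 0 := by
    by_contra h
    push_neg at h
    exact absurd (ENNReal.ofReal_pos.mpr h).ne' (by simp [← h1])
  have h3 : Function.leftLim (cdf ν) b ≤ cdf ν b := (monotone_cdf ν).leftLim_le le_rfl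
  linarith

lemma measure_cdf_le_eq {ν : Measure ℝ} [IsProbabilityMeasure ν] [NullSingletonClass ν] {c : ℝ}
    (hc0 : 0 ≤ c) (hc1 : c ≤ 1) :
    ν {y | cdf ν y ≤ c} = ENNReal.ofReal c := by
  set F := cdf ν with hF
  set s := {y : ℝ | F y ≤ c} with hs
  have hmem : ∀ y : ℝ, y ∈ s ↔ F y ≤ c := fun y => Iff.rfl
  rcases eq_empty_or_nonempty s with he | hne
  · have hc : c ≤ 0 := by
      refine ge_of_tendsto (tendsto_cdf_atBot ν) (Eventually.of_forall fun y => ?_)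
      by_contra h
      push_neg at h
      exact (eq_empty_iff_forall_notMem.mp he y) ((hmem y).mpr h.le)
    have : c = 0 := le_antisymm hc hc0
    simp [he, this]
  by_cases hbdd : BddAbove s
  · set b := sSup s with hb
    have hlt : ∀ y < b, F y ≤ c := by
      intro y hy
      obtain ⟨z, hz, hyz⟩ := exists_lt_of_lt_csSup hne hy
      exact le_trans ((monotone_cdf ν) hyz.le) ((hmem z).mp hz)
    have hFb_le : F b ≤ c := by
      rw [show F b = Function.leftLim F b from (cdf_leftLim_eq b).symm]
      refine le_of_tendsto ((monotone_cdf ν).tendsto_leftLim b) ?_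
      filter_upwards [self_mem_nhdsWithin] with y hy using hlt y hy
    have hseq : s = Iic b := by
      apply Subset.antisymm
      · exact fun y hy => le_csSup hbdd hy
      · exact fun y (hy : y ≤ b) => (hmem y).mpr (le_trans ((monotone_cdf ν) hy) hFb_le)
    have hFb_ge : c ≤ F b := by
      have htt : Tendsto F (𝓝[>] b) (𝓝 (F b)) :=
        ((cdf ν).right_continuous b).tendsto.mono_left
          (nhdsWithin_mono b Ioi_subset_Ici_self)
      refine ge_of_tendsto htt ?_
      filter_upwards [self_mem_nhdsWithin] with y hy
      by_contra h
      push_neg at h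
      have hys : y ∈ s := (hmem y).mpr h.le
      rw [hseq] at hys
      exact absurd (mem_Ioi.mp hy) (not_lt.mpr hys)
    have : F b = c := le_antisymm hFb_le hFb_ge
    rw [hseq, ← ofReal_cdf ν b, this]
  · have huniv : s = univ := by
      rw [eq_univ_iff_forall]
      intro y
      obtain ⟨z, hz, hyz⟩ := not_bddAbove_iff.mp hbdd y
      exact (hmem y).mpr (le_trans ((monotone_cdf ν) hyz.le) ((hmem z).mp hz))
    have hc : 1 ≤ c := by
      refine le_of_tendsto (tendsto_cdf_atTop ν) (Eventually.of_forall fun y => ?_)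
      exact (hmem y).mp (huniv ▸ mem_univ y)
    have : c = 1 := le_antisymm hc1 hc
    rw [huniv, this]
    simp

lemma measure_one_le_cdf {ν : Measure ℝ} [IsProbabilityMeasure ν] [NullSingletonClass ν] :
    ν {y | 1 ≤ cdf ν y} = 0 := by
  set F := cdf ν with hF
  set t := {y : ℝ | 1 ≤ F y} with ht
  have hmem : ∀ y : ℝ, y ∈ t ↔ 1 ≤ F y := fun _ => Iff.rfl
  rcases eq_empty_or_nonempty t with he | hne
  · simp [he]
  by_cases hbdd : BddBelow t
  · set b := sInf t with hb
    have hgt : ∀ y, b < y → 1 ≤ F y := by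
      intro y hy
      obtain ⟨z, hz, hzy⟩ := exists_lt_of_csInf_lt hne hy
      exact le_trans ((hmem z).mp hz) ((monotone_cdf ν) hzy.le)
    have hFb : 1 ≤ F b := by
      have htt : Tendsto F (𝓝[>] b) (𝓝 (F b)) :=
        ((cdf ν).right_continuous b).tendsto.mono_left
          (nhdsWithin_mono b Ioi_subset_Ici_self)
      refine ge_of_tendsto htt ?_
      filter_upwards [self_mem_nhdsWithin] with y hy using hgt y (mem_Ioi.mp hy)
    have hteq : t = Ici b := by
      apply Subset.antisymm
      · exact fun y hy => csInf_le hbdd hy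
      · exact fun y (hy : b ≤ y) => (hmem y).mpr (le_trans hFb ((monotone_cdf ν) hy))
    have hIic : ν (Iic b) = 1 := by
      rw [← ofReal_cdf ν b]
      have h1 : F b ≤ 1 := cdf_le_one ν b
      have : F b = 1 := le_antisymm h1 hFb
      rw [this]; simp
    have hIio : ν (Iio b) = 1 := by
      rw [show ν (Iio b) = ν (Iic b) from measure_congr Iio_ae_eq_Iic, hIic]
    rw [hteq, show Ici b = (Iio b)ᶜ from compl_Iio.symm,
      measure_compl measurableSet_Iio (measure_ne_top ν _), hIio, measure_univ]
    simp
  · exfalso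
    have huniv : ∀ y : ℝ, 1 ≤ F y := by
      intro y
      obtain ⟨z, hz, hzy⟩ := not_bddBelow_iff.mp hbdd y
      exact le_trans ((hmem z).mp hz) ((monotone_cdf ν) hzy.le)
    have : (1 : ℝ) ≤ 0 :=
      ge_of_tendsto (tendsto_cdf_atBot ν) (Eventually.of_forall huniv)
    linarith

/-- Any probability measure on `ℝ` is a pushforward of an atomless probability measure. -/
lemma exists_map_real (ν : Measure ℝ) [IsProbabilityMeasure ν] [NullSingletonClass ν]
    (μ : Measure ℝ) [IsProbabilityMeasure μ] :
    ∃ T : ℝ → ℝ, Measurable T ∧ Measure.map T ν = μ := by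
  classical
  set F := cdf ν with hF
  set G := cdf μ with hG
  set Q : ℝ → ℝ := fun u => if 0 < u ∧ u < 1 then sInf {x | u ≤ G x} else 0 with hQ
  -- the key property of the quantile function
  have key : ∀ u : ℝ, 0 < u → u < 1 → ∀ x : ℝ, (Q u ≤ x ↔ u ≤ G x) := by
    intro u hu0 hu1 x
    set Su := {x : ℝ | u ≤ G x} with hSu
    have hne : Su.Nonempty := by
      have : ∀ᶠ z in atTop, u ≤ G z :=
        (tendsto_cdf_atTop μ).eventually (eventually_ge_nhds hu1)
      exact this.exists
    have hbdd : BddBelow Su := by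
      have : ∀ᶠ z in atBot, G z < u :=
        (tendsto_cdf_atBot μ).eventually (eventually_lt_nhds hu0)
      obtain ⟨x₁, hx₁⟩ := this.exists
      refine ⟨x₁, fun z hz => ?_⟩
      by_contra h
      push_neg at h
      exact absurd (le_trans hz ((monotone_cdf μ) h.le)) (not_le.mpr hx₁)
    have hQu : Q u = sInf Su := by rw [hQ]; simp [hu0, hu1, hSu]
    have hgt : ∀ y, sInf Su < y → u ≤ G y := by
      intro y hy
      obtain ⟨z, hz, hzy⟩ := exists_lt_of_csInf_lt hne hy
      exact le_trans hz ((monotone_cdf μ) hzy.le)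
    have hmemInf : u ≤ G (sInf Su) := by
      have htt : Tendsto G (𝓝[>] (sInf Su)) (𝓝 (G (sInf Su))) :=
        ((cdf μ).right_continuous _).tendsto.mono_left
          (nhdsWithin_mono _ Ioi_subset_Ici_self)
      refine ge_of_tendsto htt ?_
      filter_upwards [self_mem_nhdsWithin] with y hy using hgt y (mem_Ioi.mp hy)
    rw [hQu]
    constructor
    · intro h
      exact le_trans hmemInf ((monotone_cdf μ) h)
    · intro h
      exact csInf_le hbdd h
  set T : ℝ → ℝ := fun y => Q (F y) with hT
  have hQmeas : Measurable Q := by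
    apply measurable_of_Iic
    intro x
    have : Q ⁻¹' (Iic x) =
        (Ioo (0:ℝ) 1 ∩ Iic (G x)) ∪ (if (0:ℝ) ≤ x then (Ioo (0:ℝ) 1)ᶜ else ∅) := by
      ext u
      by_cases hu : u ∈ Ioo (0:ℝ) 1
      · simp only [mem_preimage, mem_Iic, mem_union, mem_inter_iff, hu, true_and]
        rw [key u hu.1 hu.2 x]
        constructor
        · intro h; exact Or.inl h
        · rintro (h | h)
          · exact h
          · exfalso
            split at h
            · exact h hu
            · exact h
      · have : Q u = 0 := by
          rw [hQ]
          have : ¬ (0 < u ∧ u < 1) := by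
            intro hc; exact hu ⟨hc.1, hc.2⟩
          simp [this]
        simp only [mem_preimage, mem_Iic, this, mem_union, mem_inter_iff]
        constructor
        · intro h
          right
          rw [if_pos h]
          exact hu
        · rintro (h | h)
          · exact absurd h.1 hu
          · split at h
            · assumption
            · exact h.elim
    rw [this]
    refine ((measurableSet_Ioo).inter measurableSet_Iic).union ?_
    split
    · exact measurableSet_Ioo.compl
    · exact MeasurableSet.empty
  have hFmeas : Measurable F := (monotone_cdf ν).measurable
  have hTmeas : Measurable T := hQmeas.comp hFmeas
  refine ⟨T, hTmeas, ?_⟩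
  haveI : IsProbabilityMeasure (Measure.map T ν) :=
    Measure.isProbabilityMeasure_map hTmeas.aemeasurable
  set A := {y : ℝ | 0 < F y ∧ F y < 1} with hA
  have hAc : ν Aᶜ = 0 := by
    have hsub : Aᶜ ⊆ {y | F y ≤ 0} ∪ {y | 1 ≤ F y} := by
      intro y hy
      simp only [hA, mem_compl_iff, mem_setOf_eq, not_and_or, not_lt] at hy
      rcases hy with h | h
      · exact Or.inl h
      · exact Or.inr h
    refine measure_mono_null hsub (measure_union_null ?_ ?_)
    · simpa using measure_cdf_le_eq (ν := ν) (c := 0) le_rfl zero_le_one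
    · exact measure_one_le_cdf
  refine Measure.ext_of_Iic (Measure.map T ν) μ (fun x => ?_)
  rw [Measure.map_apply hTmeas measurableSet_Iic, ← ofReal_cdf μ x]
  have hinter : T ⁻¹' (Iic x) ∩ A = {y | F y ≤ G x} ∩ A := by
    ext y
    simp only [mem_inter_iff, mem_preimage, mem_Iic, mem_setOf_eq, hA, and_congr_left_iff]
    intro hy
    exact key (F y) hy.1 hy.2 x
  have e1 : ν (T ⁻¹' (Iic x)) = ν (T ⁻¹' (Iic x) ∩ A) := by
    refine (measure_inter_conull ?_).symm
    exact hAc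
  have e2 : ν ({y | F y ≤ G x} ∩ A) = ν {y | F y ≤ G x} := measure_inter_conull hAc
  rw [e1, hinter, e2]
  exact measure_cdf_le_eq (cdf_nonneg μ x) (cdf_le_one μ x)

lemma not_countable_pi_real {k : ℕ} (hk : 0 < k) : ¬ Countable (Fin k → ℝ) := by
  intro h
  have hinj : Function.Injective (fun (x : ℝ) => (fun _ : Fin k => x)) := by
    intro a b hab
    exact congrFun hab ⟨0, hk⟩
  have : Countable ℝ := Function.Injective.countable hinj
  exact not_countable this

/-- Any Borel probability measure on `ℝ^l` is the pushforward of the standard Gaussian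
on `ℝ^k` (k, l ≥ 1) by a measurable map. -/
lemma exists_map_pi_gaussian {k l : ℕ} (hk : 0 < k) (hl : 0 < l)
    (μ : Measure (Fin l → ℝ)) [IsProbabilityMeasure μ] :
    ∃ T : (Fin k → ℝ) → (Fin l → ℝ), Measurable T ∧
      Measure.map T (Measure.pi fun _ : Fin k => gaussianReal 0 1) = μ := by
  classical
  set γ : Measure (Fin k → ℝ) := Measure.pi fun _ : Fin k => gaussianReal 0 1 with hγ
  haveI : NullSingletonClass (gaussianReal (0:ℝ) (1:ℝ≥0)) := by
    constructor
    intro x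
    exact gaussianReal_absolutelyContinuous (0:ℝ) one_ne_zero (measure_singleton x)
  haveI : NullSingletonClass γ := Measure.pi_noAtoms ⟨0, hk⟩
  have e₁ : (Fin k → ℝ) ≃ᵐ ℝ :=
    PolishSpace.measurableEquivOfNotCountable (not_countable_pi_real hk)
      not_countable
  have e₂ : (Fin l → ℝ) ≃ᵐ ℝ :=
    PolishSpace.measurableEquivOfNotCountable (not_countable_pi_real hl)
      not_countable
  set ν₀ : Measure ℝ := Measure.map e₁ γ with hν₀
  haveI : IsProbabilityMeasure ν₀ := Measure.isProbabilityMeasure_map e₁.measurable.aemeasurable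
  haveI : NullSingletonClass ν₀ := by
    constructor
    intro x
    rw [hν₀, Measure.map_apply e₁.measurable (measurableSet_singleton x)]
    have : e₁ ⁻¹' {x} = {e₁.symm x} := by
      ext y
      simp only [mem_preimage, mem_singleton_iff]
      constructor
      · intro h; rw [← h]; simp
      · intro h; rw [h]; simp
    rw [this]
    exact measure_singleton _
  set μ' : Measure ℝ := Measure.map e₂ μ with hμ'
  haveI : IsProbabilityMeasure μ' := Measure.isProbabilityMeasure_map e₂.measurable.aemeasurable
  obtain ⟨T₀, hT₀meas, hT₀⟩ := exists_map_real ν₀ μ'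
  refine ⟨e₂.symm ∘ T₀ ∘ e₁, (e₂.symm.measurable.comp hT₀meas).comp e₁.measurable, ?_⟩
  have : Measure.map (e₂.symm ∘ T₀ ∘ e₁) γ = Measure.map e₂.symm (Measure.map T₀ (Measure.map e₁ γ)) := by
    rw [Measure.map_map hT₀meas e₁.measurable,
      Measure.map_map e₂.symm.measurable (hT₀meas.comp e₁.measurable)]
  rw [this, ← hν₀, hT₀, hμ', Measure.map_map e₂.symm.measurable e₂.measurable]
  simp

lemma analyticSet_union {α : Type*} [TopologicalSpace α] [T2Space α] {s t : Set α}
    (hs : MeasureTheory.AnalyticSet s) (ht : MeasureTheory.AnalyticSet t) :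
    MeasureTheory.AnalyticSet (s ∪ t) := by
  rw [union_eq_iUnion]
  exact MeasureTheory.AnalyticSet.iUnion (fun b => by cases b <;> simpa)


end AuxiliaryLemmas

/-- Theorem 4.1(b): the sparsity-constrained multi-domain GAN solution
inverts to a solution of Problem (3). Under block independence, domain variability, the
regular density condition, simply connected supports, and strictly over-estimated latent
dimensions `d̂C > dC`, `d̂S > dS`, suppose differentiable maps `(q̂, êC, êS⁽ⁿ⁾)` minimize
`Σₙ E[‖êS⁽ⁿ⁾(r_S⁽ⁿ⁾)‖₀]` among all tuples matching the data distributions of all domains, and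
`q̂ : 𝒞̂ × 𝒮̂ → 𝒳` is bijective. Then `f̂ = q̂⁻¹` is a solution of Problem (3). -/
theorem sparse_gan_solution_inverts_to_relaxed_LDM_solution
    (N d dC dS dCh dSh : ℕ) (hN : 2 ≤ N)
    (hdC : dC < dCh) (hdS : dS < dSh)
    -- supports of the latent variables, simply connected open sets
    (C : Set (Fin dC → ℝ)) (hCopen : IsOpen C) (hCsc : SimplyConnectedSpace C)
    (S : Set (Fin dS → ℝ)) (hSopen : IsOpen S) (hSsc : SimplyConnectedSpace S)
    -- laws of the content and style variables (block independence: P_{z^(n)} = μC ⊗ μS n)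
    (μC : Measure (Fin dC → ℝ)) [IsProbabilityMeasure μC]
    (μS : Fin N → Measure (Fin dS → ℝ)) [∀ n, IsProbabilityMeasure (μS n)]
    (hμC : μC Cᶜ = 0) (hμS : ∀ n, μS n Sᶜ = 0)
    -- regular density condition: each P_{z^(n)} has a density, finite and positive on 𝒵
    (hdens : ∀ n : Fin N, ∃ p : (Fin dC → ℝ) × (Fin dS → ℝ) → ℝ≥0∞, Measurable p ∧
      μC.prod (μS n) = volume.withDensity p ∧ ∀ z ∈ C ×ˢ S, 0 < p z ∧ p z < ⊤)
    -- the generator `g`, a differentiable bijection from 𝒞 × 𝒮 onto 𝒳 = g(𝒞 × 𝒮)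
    (g : (Fin dC → ℝ) × (Fin dS → ℝ) → (Fin d → ℝ))
    (hg_meas : Measurable g)
    (hg_diff : DifferentiableOn ℝ g (C ×ˢ S))
    (hg_inj : InjOn g (C ×ˢ S))
    -- Assumption 3.2 (domain variability)
    (hvar : ∀ A : Set ((Fin dC → ℝ) × (Fin dS → ℝ)), MeasurableSet A → A ⊆ C ×ˢ S →
      (∀ n, 0 < (μC.prod (μS n)) A) → (¬ ∃ B ⊆ C, A = B ×ˢ S) →
      ∃ i j : Fin N, (μC.prod (μS i)) A ≠ (μC.prod (μS j)) A)
    -- the learned generator and latent maps, differentiable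
    (q : (Fin dCh → ℝ) × (Fin dSh → ℝ) → (Fin d → ℝ)) (hq_diff : Differentiable ℝ q)
    (eC : (Fin dCh → ℝ) → (Fin dCh → ℝ)) (heC_diff : Differentiable ℝ eC)
    (eS : Fin N → (Fin dSh → ℝ) → (Fin dSh → ℝ)) (heS_diff : ∀ n, Differentiable ℝ (eS n))
    -- data-domain distribution matching against independent standard Gaussian latents
    (hmatch : ∀ n : Fin N,
      Measure.map (fun r : (Fin dCh → ℝ) × (Fin dSh → ℝ) => q (eC r.1, eS n r.2))
          ((Measure.pi fun _ : Fin dCh => ProbabilityTheory.gaussianReal 0 1).prod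
            (Measure.pi fun _ : Fin dSh => ProbabilityTheory.gaussianReal 0 1)) =
        Measure.map g (μC.prod (μS n)))
    -- minimality of the style sparsity among all distribution-matching tuples
    (hopt : ∀ (q' : (Fin dCh → ℝ) × (Fin dSh → ℝ) → (Fin d → ℝ))
        (eC' : (Fin dCh → ℝ) → (Fin dCh → ℝ))
        (eS' : Fin N → (Fin dSh → ℝ) → (Fin dSh → ℝ)),
      Measurable q' → Measurable eC' → (∀ n, Measurable (eS' n)) →
      (∀ n : Fin N,
        Measure.map (fun r : (Fin dCh → ℝ) × (Fin dSh → ℝ) => q' (eC' r.1, eS' n r.2))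
            ((Measure.pi fun _ : Fin dCh => ProbabilityTheory.gaussianReal 0 1).prod
              (Measure.pi fun _ : Fin dSh => ProbabilityTheory.gaussianReal 0 1)) =
          Measure.map g (μC.prod (μS n))) →
      ∑ n : Fin N, ∫⁻ r, (zeroNorm (eS n r) : ℝ≥0∞)
          ∂(Measure.pi fun _ : Fin dSh => ProbabilityTheory.gaussianReal 0 1) ≤
        ∑ n : Fin N, ∫⁻ r, (zeroNorm (eS' n r) : ℝ≥0∞)
          ∂(Measure.pi fun _ : Fin dSh => ProbabilityTheory.gaussianReal 0 1))
    -- assumed bijectivity of `q̂` from 𝒞̂ × 𝒮̂ onto 𝒳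
    (hbij : BijOn q (range eC ×ˢ ⋃ n : Fin N, range (eS n)) (g '' (C ×ˢ S))) :
    -- the inverse `f̂ = q̂⁻¹` is a solution of Problem (3):
    ∃ f : (Fin d → ℝ) → (Fin dCh → ℝ) × (Fin dSh → ℝ),
      Measurable f ∧
      InvOn f q (range eC ×ˢ ⋃ n : Fin N, range (eS n)) (g '' (C ×ˢ S)) ∧
      -- feasibility
      InjOn f (g '' (C ×ˢ S)) ∧
      (∀ i j : Fin N,
        Measure.map (fun x => (f x).1) (Measure.map g (μC.prod (μS i))) =
          Measure.map (fun x => (f x).1) (Measure.map g (μC.prod (μS j)))) ∧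
      (∀ n : Fin N,
        Measure.map f (Measure.map g (μC.prod (μS n))) =
          (Measure.map (fun x => (f x).1) (Measure.map g (μC.prod (μS n)))).prod
            (Measure.map (fun x => (f x).2) (Measure.map g (μC.prod (μS n))))) ∧
      -- optimality for the sparsity objective of Problem (3)
      (∀ (fC' : (Fin d → ℝ) → (Fin dCh → ℝ)) (fS' : (Fin d → ℝ) → (Fin dSh → ℝ)),
        Measurable fC' → Measurable fS' →
        InjOn (fun x => (fC' x, fS' x)) (g '' (C ×ˢ S)) →
        (∀ i j : Fin N,
          Measure.map fC' (Measure.map g (μC.prod (μS i))) =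
            Measure.map fC' (Measure.map g (μC.prod (μS j)))) →
        (∀ n : Fin N,
          Measure.map (fun x => (fC' x, fS' x)) (Measure.map g (μC.prod (μS n))) =
            (Measure.map fC' (Measure.map g (μC.prod (μS n)))).prod
              (Measure.map fS' (Measure.map g (μC.prod (μS n))))) →
        ∑ n : Fin N, ∫⁻ x, (zeroNorm ((f x).2) : ℝ≥0∞) ∂(Measure.map g (μC.prod (μS n))) ≤
          ∑ n : Fin N, ∫⁻ x, (zeroNorm (fS' x) : ℝ≥0∞) ∂(Measure.map g (μC.prod (μS n)))) := by
  classical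
  have hq_meas : Measurable q := hq_diff.continuous.measurable
  have heC_meas : Measurable eC := heC_diff.continuous.measurable
  have heS_meas : ∀ n, Measurable (eS n) := fun n => (heS_diff n).continuous.measurable
  set γC : Measure (Fin dCh → ℝ) := Measure.pi fun _ => ProbabilityTheory.gaussianReal 0 1
    with hγCdef
  set γS : Measure (Fin dSh → ℝ) := Measure.pi fun _ => ProbabilityTheory.gaussianReal 0 1
    with hγSdef
  set X : Set (Fin d → ℝ) := g '' (C ×ˢ S) with hXdef
  set D : Set ((Fin dCh → ℝ) × (Fin dSh → ℝ)) := range eC ×ˢ ⋃ n : Fin N, range (eS n)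
    with hDdef
  have hXmble : MeasurableSet X :=
    MeasurableSet.image_of_continuousOn_injOn (hCopen.prod hSopen).measurableSet
      hg_diff.continuousOn hg_inj
  have hDu : D = ⋃ n : Fin N, range (Prod.map eC (eS n)) := by
    rw [hDdef, prod_iUnion]
    simp_rw [← range_prodMap]
  -- images of Borel sets intersected with `D` are measurable (Lusin–Suslin via analytic sets)
  haveI : Nonempty (Fin N) := ⟨⟨0, by omega⟩⟩
  have hana : ∀ B' : Set ((Fin dCh → ℝ) × (Fin dSh → ℝ)), MeasurableSet B' →
      MeasureTheory.AnalyticSet (q '' (B' ∩ D)) := by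
    intro B' hB'
    have himage : q '' (B' ∩ D)
        = ⋃ n : Fin N, (q ∘ Prod.map eC (eS n)) '' (Prod.map eC (eS n) ⁻¹' B') := by
      rw [hDu, inter_iUnion, image_iUnion]
      refine iUnion_congr fun n => ?_
      rw [image_comp, image_preimage_eq_inter_range, inter_comm]
    rw [himage]
    refine MeasureTheory.AnalyticSet.iUnion fun n => ?_
    have hmn : Measurable (Prod.map eC (eS n)) := heC_meas.prodMap (heS_meas n)
    exact (hB'.preimage hmn).analyticSet_image (hq_meas.comp hmn)
  have himg : ∀ B : Set ((Fin dCh → ℝ) × (Fin dSh → ℝ)), MeasurableSet B →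
      MeasurableSet (q '' (B ∩ D)) := by
    intro B hB
    have hs1 := hana B hB
    have hs2 := hana Bᶜ hB.compl
    have hUeq : q '' (B ∩ D) ∪ q '' (Bᶜ ∩ D) = X := by
      rw [← image_union, ← union_inter_distrib_right, union_compl_self, univ_inter,
        hbij.image_eq]
    have hdisj : Disjoint (q '' (B ∩ D)) (q '' (Bᶜ ∩ D)) := by
      rw [disjoint_left]
      rintro y ⟨a, ⟨haB, haD⟩, rfl⟩ ⟨b, ⟨hbB, hbD⟩, hba⟩
      exact hbB (hbij.injOn hbD haD hba ▸ haB)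
    have hsubX : q '' (B ∩ D) ⊆ X := hUeq ▸ subset_union_left
    have hcompl : (q '' (B ∩ D))ᶜ = q '' (Bᶜ ∩ D) ∪ Xᶜ := by
      ext y
      simp only [mem_compl_iff, mem_union]
      constructor
      · intro hy
        by_cases hyX : y ∈ X
        · have : y ∈ q '' (B ∩ D) ∪ q '' (Bᶜ ∩ D) := hUeq.symm ▸ hyX
          rcases this with h | h
          · exact absurd h hy
          · exact Or.inl h
        · exact Or.inr hyX
      · rintro (h | h)
        · exact fun hy => (disjoint_left.mp hdisj hy) h
        · exact fun hy => h (hsubX hy)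
    refine hs1.measurableSet_of_compl ?_
    rw [hcompl]
    exact analyticSet_union hs2 hXmble.compl.analyticSet
  obtain ⟨f, hf_meas, hfleft, hfright0, hfmaps⟩ := exists_invFun himg hbij.injOn
  have hfright : RightInvOn f q X := by rwa [hbij.image_eq] at hfright0
  have hmemD : ∀ (rc : Fin dCh → ℝ) (rs : Fin dSh → ℝ) (n : Fin N), (eC rc, eS n rs) ∈ D :=
    fun rc rs n => ⟨mem_range_self _, mem_iUnion.2 ⟨n, mem_range_self _⟩⟩
  -- the pushforward of each data distribution under `f`
  have hlamprob : ∀ n, IsProbabilityMeasure (Measure.map (eS n) γS) :=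
    fun n => Measure.isProbabilityMeasure_map (heS_meas n).aemeasurable
  haveI hκprob : IsProbabilityMeasure (Measure.map eC γC) :=
    Measure.isProbabilityMeasure_map heC_meas.aemeasurable
  have hmapf : ∀ n, Measure.map f (Measure.map g (μC.prod (μS n)))
      = (Measure.map eC γC).prod (Measure.map (eS n) γS) := by
    intro n
    have hφm : Measurable (fun r : (Fin dCh → ℝ) × (Fin dSh → ℝ) => q (eC r.1, eS n r.2)) :=
      hq_meas.comp ((heC_meas.comp measurable_fst).prodMk ((heS_meas n).comp measurable_snd))
    rw [← hmatch n, Measure.map_map hf_meas hφm]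
    have hcomp : f ∘ (fun r : (Fin dCh → ℝ) × (Fin dSh → ℝ) => q (eC r.1, eS n r.2))
        = Prod.map eC (eS n) := by
      funext r
      exact hfleft (hmemD r.1 r.2 n)
    rw [hcomp, ← Measure.map_prod_map γC γS heC_meas (heS_meas n)]
  have hfst : ∀ n, Measure.map (fun x => (f x).1) (Measure.map g (μC.prod (μS n)))
      = Measure.map eC γC := by
    intro n
    have h1 : (fun x => (f x).1) = Prod.fst ∘ f := rfl
    haveI := hlamprob n
    rw [h1, ← Measure.map_map measurable_fst hf_meas, hmapf n, Measure.map_fst_prod,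
      measure_univ, one_smul]
  have hsnd : ∀ n, Measure.map (fun x => (f x).2) (Measure.map g (μC.prod (μS n)))
      = Measure.map (eS n) γS := by
    intro n
    have h1 : (fun x => (f x).2) = Prod.snd ∘ f := rfl
    haveI := hlamprob n
    rw [h1, ← Measure.map_map measurable_snd hf_meas, hmapf n, Measure.map_snd_prod,
      measure_univ, one_smul]
  have hobj : ∀ n, ∫⁻ x, (zeroNorm ((f x).2) : ℝ≥0∞) ∂(Measure.map g (μC.prod (μS n)))
      = ∫⁻ r, (zeroNorm (eS n r) : ℝ≥0∞) ∂γS := by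
    intro n
    have hzmeas := measurable_zeroNorm dSh
    have h1 : ∫⁻ x, (zeroNorm ((f x).2) : ℝ≥0∞) ∂(Measure.map g (μC.prod (μS n)))
        = ∫⁻ z, (zeroNorm z.2 : ℝ≥0∞) ∂(Measure.map f (Measure.map g (μC.prod (μS n)))) := by
      rw [lintegral_map (show Measurable fun z : (Fin dCh → ℝ) × (Fin dSh → ℝ) =>
        (zeroNorm z.2 : ℝ≥0∞) from hzmeas.comp measurable_snd) hf_meas]
    haveI := hlamprob n
    rw [h1, hmapf n, show (∫⁻ z, (zeroNorm z.2 : ℝ≥0∞)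
        ∂((Measure.map eC γC).prod (Measure.map (eS n) γS)))
        = ∫⁻ s, (zeroNorm s : ℝ≥0∞)
          ∂(Measure.map Prod.snd ((Measure.map eC γC).prod (Measure.map (eS n) γS)))
        from (lintegral_map hzmeas measurable_snd).symm, Measure.map_snd_prod, measure_univ,
      one_smul, lintegral_map hzmeas (heS_meas n)]
  refine ⟨f, hf_meas, ⟨hfleft, hfright⟩, ?_, ?_, ?_, ?_⟩
  · intro y1 h1 y2 h2 hE
    rw [← hfright h1, ← hfright h2, hE]
  · intro i j
    rw [hfst i, hfst j]
  · intro n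
    rw [hmapf n, hfst n, hsnd n]
  -- optimality
  · intro fC' fS' hfC' hfS' hinj' hCeq hprod'
    have hdCh0 : 0 < dCh := lt_of_le_of_lt (Nat.zero_le dC) hdC
    have hdSh0 : 0 < dSh := lt_of_le_of_lt (Nat.zero_le dS) hdS
    set n₀ : Fin N := ⟨0, by omega⟩ with hn₀
    have hPm : ∀ n, IsProbabilityMeasure (Measure.map g (μC.prod (μS n))) :=
      fun n => Measure.isProbabilityMeasure_map hg_meas.aemeasurable
    haveI := hPm n₀
    haveI : IsProbabilityMeasure (Measure.map fC' (Measure.map g (μC.prod (μS n₀)))) :=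
      Measure.isProbabilityMeasure_map hfC'.aemeasurable
    obtain ⟨eC'', heC''m, heC''⟩ :=
      exists_map_pi_gaussian hdCh0 hdCh0 (Measure.map fC' (Measure.map g (μC.prod (μS n₀))))
    have hSexists : ∀ n : Fin N, ∃ T : (Fin dSh → ℝ) → (Fin dSh → ℝ), Measurable T ∧
        Measure.map T γS = Measure.map fS' (Measure.map g (μC.prod (μS n))) := by
      intro n
      haveI := hPm n
      haveI : IsProbabilityMeasure (Measure.map fS' (Measure.map g (μC.prod (μS n)))) :=
        Measure.isProbabilityMeasure_map hfS'.aemeasurable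
      exact exists_map_pi_gaussian hdSh0 hdSh0 _
    choose eS'' heS''m heS'' using hSexists
    have hf'meas : Measurable (fun x => (fC' x, fS' x)) := hfC'.prodMk hfS'
    have himg' : ∀ B : Set (Fin d → ℝ), MeasurableSet B →
        MeasurableSet ((fun x => (fC' x, fS' x)) '' (B ∩ X)) := by
      intro B hB
      exact (hB.inter hXmble).image_of_measurable_injOn hf'meas
        (hinj'.mono inter_subset_right)
    obtain ⟨q'', hq''m, hq''left, -, -⟩ := exists_invFun himg' hinj'
    have hXc : ∀ n, Measure.map g (μC.prod (μS n)) Xᶜ = 0 := by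
      intro n
      rw [Measure.map_apply hg_meas hXmble.compl]
      have hsub : g ⁻¹' Xᶜ ⊆ (C ×ˢ S)ᶜ := fun z hz hzc => hz (mem_image_of_mem g hzc)
      refine measure_mono_null hsub ?_
      rw [compl_prod_eq_union]
      refine measure_union_null ?_ ?_
      · rw [Measure.prod_prod]
        simp [hμC]
      · rw [Measure.prod_prod]
        simp [hμS n]
    have hmatch'' : ∀ n : Fin N,
        Measure.map (fun r : (Fin dCh → ℝ) × (Fin dSh → ℝ) => q'' (eC'' r.1, eS'' n r.2))
          (γC.prod γS) = Measure.map g (μC.prod (μS n)) := by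
      intro n
      haveI := hPm n
      have h1 : Measure.map (Prod.map eC'' (eS'' n)) (γC.prod γS)
          = Measure.map (fun x => (fC' x, fS' x)) (Measure.map g (μC.prod (μS n))) := by
        rw [← Measure.map_prod_map γC γS heC''m (heS''m n), heC'', heS'' n, hCeq n₀ n,
          ← hprod' n]
      have h3 : Measure.map (fun r : (Fin dCh → ℝ) × (Fin dSh → ℝ) => q'' (eC'' r.1, eS'' n r.2))
          (γC.prod γS)
          = Measure.map q'' (Measure.map (Prod.map eC'' (eS'' n)) (γC.prod γS)) := by
        rw [Measure.map_map hq''m (show Measurable (Prod.map eC'' (eS'' n)) from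
          heC''m.prodMap (heS''m n))]
        rfl
      rw [h3, h1, Measure.map_map hq''m hf'meas]
      have hae : (q'' ∘ fun x => (fC' x, fS' x)) =ᵐ[Measure.map g (μC.prod (μS n))] id := by
        have hX1 : ∀ᵐ x ∂(Measure.map g (μC.prod (μS n))), x ∈ X := by
          rw [ae_iff]
          exact hXc n
        filter_upwards [hX1] with x hx
        exact hq''left hx
      rw [Measure.map_congr hae, Measure.map_id]
    have hkey := hopt q'' eC'' eS'' hq''m heC''m heS''m hmatch''
    have hR : ∀ n : Fin N, ∫⁻ r, (zeroNorm (eS'' n r) : ℝ≥0∞) ∂γS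
        = ∫⁻ x, (zeroNorm (fS' x) : ℝ≥0∞) ∂(Measure.map g (μC.prod (μS n))) := by
      intro n
      rw [← lintegral_map (measurable_zeroNorm dSh) (heS''m n), heS'' n,
        lintegral_map (measurable_zeroNorm dSh) hfS']
    calc ∑ n : Fin N, ∫⁻ x, (zeroNorm ((f x).2) : ℝ≥0∞) ∂(Measure.map g (μC.prod (μS n)))
        = ∑ n : Fin N, ∫⁻ r, (zeroNorm (eS n r) : ℝ≥0∞) ∂γS :=
          Finset.sum_congr rfl fun n _ => hobj n
      _ ≤ ∑ n : Fin N, ∫⁻ r, (zeroNorm (eS'' n r) : ℝ≥0∞) ∂γS := hkey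
      _ = ∑ n : Fin N, ∫⁻ x, (zeroNorm (fS' x) : ℝ≥0∞) ∂(Measure.map g (μC.prod (μS n))) :=
          Finset.sum_congr rfl fun n _ => hR n
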